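/- Let p > 0 and F_p the CDF of the p-singular Cantor-type distribution. Then ∫_0^{1/3} F_p(u) du = (1/6)·(p+2)/((p+1)(2p+1)). -/
import Mathlib


open MeasureTheory Set Filter

/-- The CDF of the p-singular Cantor-type distribution: the monotone increasing
function on [0,1] with F(x/3) = F(x)/(p+1) for x ∈ [0,1] and
F(1-x) = 1 - p·F(x) for x ∈ [0,1/3]. -/
def IsCantorCDFp (p : ℝ) (F : ℝ → ℝ) : Prop :=
  Monotone F ∧
    (∀ x ∈ Set.Icc (0:ℝ) 1, F (x/3) = F x / (p+1)) ∧
    (∀ x ∈ Set.Icc (0:ℝ) (1/3), F (1-x) = 1 - p * F x)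

/-- The mean residual life function of a distribution with CDF F supported on [0,1]:
m(x) = (1/(1-F(x))) ∫_x^1 (1-F(u)) du  (equal to 0 at x = 1 by convention). -/
noncomputable def mrl (F : ℝ → ℝ) (x : ℝ) : ℝ :=
  (∫ u in x..(1:ℝ), (1 - F u)) / (1 - F x)

/-- For the p-singular Cantor-type CDF, ∫_0^{1/3} F_p(u) du = (1/6)·(p+2)/((p+1)(2p+1)). -/
theorem cantorp_integral_left (p : ℝ) (hp : 0 < p) (F : ℝ → ℝ) (hF : IsCantorCDFp p F) :
    ∫ u in (0:ℝ)..(1/3), F u = 1/6 * ((p + 2) / ((p + 1) * (2 * p + 1))) := by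
  obtain ⟨hmono, hscale, hsym⟩ := hF
  have hp1 : p + 1 ≠ 0 := by positivity
  -- F 0 = 0
  have hF0 : F 0 = 0 := by
    have h := hscale 0 (by norm_num)
    rw [show (0:ℝ)/3 = 0 by norm_num] at h
    have : F 0 * (p + 1) = F 0 := by field_simp [hp1] at h ⊢; linarith [h]
    nlinarith [this]
  have hF1 : F 1 = 1 := by
    have h := hsym 0 (by norm_num)
    simp [hF0] at h
    linarith
  have hF13 : F (1/3) = 1 / (p+1) := by
    have h := hscale 1 (by norm_num)
    rw [hF1] at h; exact h
  have hF23 : F (2/3) = 1 / (p+1) := by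
    have h := hsym (1/3) (by norm_num)
    rw [show (1:ℝ) - 1/3 = 2/3 by norm_num, hF13] at h
    field_simp at h ⊢
    linarith
  have hmid : ∀ u ∈ Set.uIcc (1/3:ℝ) (2/3), F u = 1/(p+1) := by
    intro u hu
    rw [Set.uIcc_of_le (by norm_num)] at hu
    have h1 := hmono hu.1
    have h2 := hmono hu.2
    rw [hF13] at h1; rw [hF23] at h2
    linarith
  -- integrability
  have hint : ∀ a b : ℝ, IntervalIntegrable F volume a b := fun a b =>
    (hmono.monotoneOn _).intervalIntegrable
  set A := ∫ u in (0:ℝ)..(1/3), F u with hA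
  set I := ∫ u in (0:ℝ)..(1:ℝ), F u with hI
  -- A = I / (3 (p+1))
  have hAI : A = I / (3 * (p+1)) := by
    have heq : ∀ u ∈ Set.uIcc (0:ℝ) (1/3), F u = F (3*u) / (p+1) := by
      intro u hu
      rw [Set.uIcc_of_le (by norm_num)] at hu
      have h := hscale (3*u) (by constructor <;> linarith [hu.1, hu.2])
      rw [show 3*u/3 = u by ring] at h
      exact h
    have : A = ∫ u in (0:ℝ)..(1/3), F (3*u) / (p+1) := intervalIntegral.integral_congr heq
    rw [this, intervalIntegral.integral_div]
    have h3 : (∫ u in (0:ℝ)..(1/3), F (3*u)) = (3:ℝ)⁻¹ • ∫ x in (3*(0:ℝ))..(3*(1/3)), F x := by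
      exact intervalIntegral.integral_comp_mul_left F (by norm_num)
    rw [h3]
    norm_num
    rw [← hI]
    field_simp
  -- right part
  have hright : (∫ u in (2/3:ℝ)..(1:ℝ), F u) = 1/3 - p * A := by
    have h := intervalIntegral.integral_comp_sub_left (a := (0:ℝ)) (b := 1/3) F 1
    rw [show (1:ℝ) - 1/3 = 2/3 by norm_num, show (1:ℝ) - 0 = 1 by norm_num] at h
    rw [← h]
    have heq : ∀ x ∈ Set.uIcc (0:ℝ) (1/3), F (1-x) = 1 - p * F x := by
      intro x hx
      rw [Set.uIcc_of_le (by norm_num)] at hx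
      exact hsym x hx
    rw [intervalIntegral.integral_congr heq, intervalIntegral.integral_sub
      intervalIntegrable_const ((hint 0 (1/3)).const_mul p),
      intervalIntegral.integral_const_mul]
    rw [← hA, intervalIntegral.integral_const]
    norm_num
  have hmidint : (∫ u in (1/3:ℝ)..(2/3:ℝ), F u) = 1/(3*(p+1)) := by
    rw [intervalIntegral.integral_congr hmid]
    simp
    ring
  have hsplit : A + (∫ u in (1/3:ℝ)..(2/3:ℝ), F u) + (∫ u in (2/3:ℝ)..(1:ℝ), F u) = I := by
    rw [hA, hI]
    rw [intervalIntegral.integral_add_adjacent_intervals (hint 0 (1/3)) (hint (1/3) (2/3)),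
        intervalIntegral.integral_add_adjacent_intervals (hint 0 (2/3)) (hint (2/3) 1)]
  rw [hmidint, hright] at hsplit
  rw [hAI] at hsplit
  have h2p1 : 2*p + 1 ≠ 0 := by positivity
  have hIval : I = (p+2) / (2*(2*p+1)) := by
    field_simp at hsplit
    field_simp
    nlinarith [hsplit]
  rw [hAI, hIval]
  field_simp
  ring_nf
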